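/- arXiv:1609.09809 — 4 statements merged into one kernel-verified Lean document; each statement's English description precedes it below -/
import Mathlib

section
/- In the down-up algebra A(α,β,0) = K⟨u,d⟩/(d²u - αdud - βud², du² - αudu - βu²d), setting w_l = β·u·d + r_l·d·u where r_l is a root of t² - αt - β, the relations w_l·u = r_l·u·w_l and d·w_l = r_l·w_l·d hold. -/
noncomputable section

open FreeAlgebra

/-- The defining relations of the down-up algebra `A(α,β,γ)`:
generator `0` is `u`, generator `1` is `d`. -/
inductive DownUpRel (K : Type) [Field K] (α β γ : K) :
    FreeAlgebra K (Fin 2) → FreeAlgebra K (Fin 2) → Prop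
  | rel1 : DownUpRel K α β γ
      (ι K 1 * ι K 1 * ι K 0)
      (α • (ι K 1 * ι K 0 * ι K 1) + β • (ι K 0 * ι K 1 * ι K 1) + γ • ι K 1)
  | rel2 : DownUpRel K α β γ
      (ι K 1 * ι K 0 * ι K 0)
      (α • (ι K 0 * ι K 1 * ι K 0) + β • (ι K 0 * ι K 0 * ι K 1) + γ • ι K 0)

/-- The down-up algebra `A(α,β,γ)` of Benkart–Roby. -/
abbrev DownUp (K : Type) [Field K] (α β γ : K) : Type :=
  RingQuot (DownUpRel K α β γ)

/-- The generator `u` of the down-up algebra. -/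
def DownUp.u (K : Type) [Field K] (α β γ : K) : DownUp K α β γ :=
  RingQuot.mkAlgHom K _ (ι K 0)

/-- The generator `d` of the down-up algebra. -/
def DownUp.d (K : Type) [Field K] (α β γ : K) : DownUp K α β γ :=
  RingQuot.mkAlgHom K _ (ι K 1)

namespace DownUp

variable {K : Type} [Field K] {α β γ : K}

theorem d_mul_d_mul_u :
    d K α β γ * d K α β γ * u K α β γ =
      α • (d K α β γ * u K α β γ * d K α β γ) + β • (u K α β γ * d K α β γ * d K α β γ) +
        γ • d K α β γ := by
  simpa [u, d] using RingQuot.mkAlgHom_rel K (DownUpRel.rel1 (α := α) (β := β) (γ := γ))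

theorem d_mul_u_mul_u :
    d K α β γ * u K α β γ * u K α β γ =
      α • (u K α β γ * d K α β γ * u K α β γ) + β • (u K α β γ * u K α β γ * d K α β γ) +
        γ • u K α β γ := by
  simpa [u, d] using RingQuot.mkAlgHom_rel K (DownUpRel.rel2 (α := α) (β := β) (γ := γ))

def w (K : Type) [Field K] (α β : K) (r : K) : DownUp K α β 0 :=
  β • (u K α β 0 * d K α β 0) + r • (d K α β 0 * u K α β 0)

variable {r : K}

/- Rewriting `d u u` (resp. `d d u`) by the defining relation, the two sides agree coefficientwise
exactly when `r² = α r + β`. -/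

theorem w_mul_u (hr : r * r = α * r + β) :
    w K α β r * u K α β 0 = r • (u K α β 0 * w K α β r) := by
  have expand : w K α β r * u K α β 0 =
      β • (u K α β 0 * d K α β 0 * u K α β 0) + r • (d K α β 0 * u K α β 0 * u K α β 0) := by
    simp only [w, add_mul, smul_mul_assoc]
  rw [expand, d_mul_u_mul_u, zero_smul, add_zero, w]
  simp only [mul_assoc, mul_add, mul_smul_comm, smul_add, smul_smul]
  match_scalars
  · linear_combination -hr
  · ring

theorem d_mul_w (hr : r * r = α * r + β) :
    d K α β 0 * w K α β r = r • (w K α β r * d K α β 0) := by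
  have expand : d K α β 0 * w K α β r =
      β • (d K α β 0 * u K α β 0 * d K α β 0) + r • (d K α β 0 * d K α β 0 * u K α β 0) := by
    simp only [w, mul_add, mul_smul_comm, mul_assoc]
  rw [expand, d_mul_d_mul_u, zero_smul, add_zero, w]
  simp only [mul_assoc, add_mul, smul_mul_assoc, smul_add, smul_smul]
  match_scalars
  · linear_combination -hr
  · ring

end DownUp

theorem downUp_w_relations_general (K : Type) [Field K] (α β r₁ r₂ : K)
    (hsum : α = r₁ + r₂) (hprod : β = -(r₁ * r₂)) :
    let u := DownUp.u K α β 0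
    let d := DownUp.d K α β 0
    let w₁ := β • (u * d) + r₁ • (d * u)
    let w₂ := β • (u * d) + r₂ • (d * u)
    (w₁ * u = r₁ • (u * w₁) ∧ d * w₁ = r₁ • (w₁ * d)) ∧
    (w₂ * u = r₂ • (u * w₂) ∧ d * w₂ = r₂ • (w₂ * d)) := by
  have root₁ : r₁ * r₁ = α * r₁ + β := by rw [hsum, hprod]; ring
  have root₂ : r₂ * r₂ = α * r₂ + β := by rw [hsum, hprod]; ring
  exact ⟨⟨DownUp.w_mul_u root₁, DownUp.d_mul_w root₁⟩, ⟨DownUp.w_mul_u root₂, DownUp.d_mul_w root₂⟩⟩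

/-- In `A(α,β,0)`, with `r₁, r₂` the roots of `t² - αt - β` and
`w_l = β·u·d + r_l·d·u`, the relations `w_l·u = r_l·u·w_l` and
`d·w_l = r_l·w_l·d` hold for `l = 1, 2`. -/
theorem downUp_w_relations (K : Type) [Field K] [CharZero K] (α β r₁ r₂ : K)
    (hsum : α = r₁ + r₂) (hprod : β = -(r₁ * r₂)) :
    let u := DownUp.u K α β 0
    let d := DownUp.d K α β 0
    let w₁ := β • (u * d) + r₁ • (d * u)
    let w₂ := β • (u * d) + r₂ • (d * u)
    (w₁ * u = r₁ • (u * w₁) ∧ d * w₁ = r₁ • (w₁ * d)) ∧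
    (w₂ * u = r₂ • (u * w₂) ∧ d * w₂ = r₂ • (w₂ * d)) :=
  downUp_w_relations_general K α β r₁ r₂ hsum hprod
end
end

section
/- In the down-up algebra A(α,β,0) with r₁ ≠ 0, for a = u^i·w₁^j·d^k one has a·d - d·a = (1 - r₁^j r₂^i)·u^i w₁^j d^{k+1} - (φ_{i-1}/r₁)·u^{i-1} w₁^{j+1} d^k (where a term with negative exponent is interpreted as 0, i.e. for i = 0 the second term vanishes). -/
noncomputable section

open FreeAlgebra

/-- `φ_p = ∑_{i=0}^p r₁^i r₂^(p-i)`. -/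
def phi (K : Type) [Field K] (r₁ r₂ : K) (p : ℕ) : K :=
  ∑ i ∈ Finset.range (p + 1), r₁ ^ i * r₂ ^ (p - i)

/-- `φ_{k-1}`, with the convention `φ_{-1} = 0` (for `k = 0`). -/
def phiPred (K : Type) [Field K] (r₁ r₂ : K) (k : ℕ) : K :=
  if k = 0 then 0 else phi K r₁ r₂ (k - 1)

section Aux
variable {K : Type} [Field K] {α β r₁ r₂ : K}

lemma du_rel1 : DownUp.d K α β 0 * DownUp.d K α β 0 * DownUp.u K α β 0 =
      α • (DownUp.d K α β 0 * DownUp.u K α β 0 * DownUp.d K α β 0) +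
      β • (DownUp.u K α β 0 * DownUp.d K α β 0 * DownUp.d K α β 0) := by
  have := RingQuot.mkAlgHom_rel K (DownUpRel.rel1 (K := K) (α := α) (β := β) (γ := 0))
  simpa [DownUp.u, DownUp.d, map_mul, map_add, map_smul] using this

lemma du_rel2 : DownUp.d K α β 0 * DownUp.u K α β 0 * DownUp.u K α β 0 =
      α • (DownUp.u K α β 0 * DownUp.d K α β 0 * DownUp.u K α β 0) +
      β • (DownUp.u K α β 0 * DownUp.u K α β 0 * DownUp.d K α β 0) := by
  have := RingQuot.mkAlgHom_rel K (DownUpRel.rel2 (K := K) (α := α) (β := β) (γ := 0))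
  simpa [DownUp.u, DownUp.d, map_mul, map_add, map_smul] using this

variable (hsum : α = r₁ + r₂) (hprod : β = -(r₁ * r₂))

local notation "U" => DownUp.u K α β 0
local notation "D" => DownUp.d K α β 0
local notation "W" => β • (U * D) + r₁ • (D * U)

include hsum hprod in
lemma dw : D * W = r₁ • (W * D) := by
  have h1 : D * D * U = α • (D * U * D) + β • (U * D * D) := du_rel1
  rw [mul_add, mul_smul_comm, mul_smul_comm, ← mul_assoc, ← mul_assoc, h1]
  subst hsum hprod
  simp only [smul_add, smul_smul, add_mul, smul_mul_assoc, mul_assoc]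
  match_scalars <;> ring

include hsum hprod in
lemma wu : W * U = r₁ • (U * W) := by
  have h2 : D * U * U = α • (U * D * U) + β • (U * U * D) := du_rel2
  rw [add_mul, smul_mul_assoc, smul_mul_assoc, mul_assoc, mul_assoc, ← mul_assoc D U U, h2]
  subst hsum hprod
  simp only [smul_add, smul_smul, mul_add, mul_smul_comm, mul_assoc]
  match_scalars <;> ring

include hprod in
lemma du (hr₁ : r₁ ≠ 0) : D * U = r₂ • (U * D) + r₁⁻¹ • W := by
  subst hprod
  rw [smul_add, smul_smul, smul_smul, inv_mul_cancel₀ hr₁, one_smul]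
  match_scalars <;> first | (field_simp; ring) | field_simp

include hsum hprod in
lemma dwj : ∀ j : ℕ, D * W ^ j = (r₁ ^ j) • (W ^ j * D) := by
  intro j
  induction j with
  | zero => simp
  | succ j ih =>
    rw [pow_succ', ← mul_assoc, dw hsum hprod, smul_mul_assoc, mul_assoc, ih,
      mul_smul_comm, smul_smul, ← pow_succ']
    simp only [mul_assoc]

include hsum hprod in
lemma wuj : ∀ i : ℕ, W * U ^ i = (r₁ ^ i) • (U ^ i * W) := by
  intro i
  induction i with
  | zero => simp
  | succ i ih =>
    rw [pow_succ', ← mul_assoc, wu hsum hprod, smul_mul_assoc, mul_assoc, ih,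
      mul_smul_comm, smul_smul, ← pow_succ']
    simp only [mul_assoc]

lemma phi_rec (i : ℕ) : phi K r₁ r₂ i = r₁ ^ i + r₂ * phiPred K r₁ r₂ i := by
  cases i with
  | zero => simp [phi, phiPred]
  | succ i =>
    rw [phiPred, if_neg (Nat.succ_ne_zero i), Nat.succ_sub_one, phi, Finset.sum_range_succ,
      phi, Finset.mul_sum]
    rw [add_comm]
    congr 1
    · simp
    · apply Finset.sum_congr rfl
      intro t ht
      rw [Finset.mem_range] at ht
      have : i + 1 - t = (i - t) + 1 := by omega
      rw [this, pow_succ]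
      ring

include hsum hprod in
lemma dui' (hr₁ : r₁ ≠ 0) : ∀ i : ℕ, D * U ^ (i + 1) =
    (r₂ ^ (i + 1)) • (U ^ (i + 1) * D) + (phi K r₁ r₂ i / r₁) • (U ^ i * W) := by
  intro i
  induction i with
  | zero =>
    simp only [zero_add, pow_one, pow_zero, one_mul, phi, Finset.range_one,
      Finset.sum_range_one]
    simpa [div_eq_inv_mul] using du hprod hr₁
  | succ i ih =>
    have hrec : phi K r₁ r₂ (i + 1) = r₁ ^ (i + 1) + r₂ * phi K r₁ r₂ i := by
      rw [phi_rec, phiPred, if_neg (Nat.succ_ne_zero i), Nat.succ_sub_one]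
    conv_lhs => rw [pow_succ' U (i + 1), ← mul_assoc, du hprod hr₁, add_mul,
      smul_mul_assoc, smul_mul_assoc, mul_assoc, ih, wuj hsum hprod,
      mul_add, mul_smul_comm, mul_smul_comm, smul_add, smul_smul, smul_smul, smul_smul,
      ← mul_assoc U (U ^ (i + 1)) D, ← pow_succ' U (i + 1),
      ← mul_assoc U (U ^ i), ← pow_succ' U i]
    rw [add_assoc]
    congr 1
    · rw [← pow_succ']
    · rw [← add_smul]
      congr 1
      rw [hrec]
      field_simp
      ring

include hsum hprod in
lemma dui (hr₁ : r₁ ≠ 0) : ∀ i : ℕ, D * U ^ i =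
    (r₂ ^ i) • (U ^ i * D) + (phiPred K r₁ r₂ i / r₁) • (U ^ (i - 1) * W) := by
  intro i
  cases i with
  | zero => simp [phiPred]
  | succ i =>
    rw [phiPred, if_neg (Nat.succ_ne_zero i), Nat.succ_sub_one]
    exact dui' hsum hprod hr₁ i

end Aux

/-- In `A(α,β,0)` with `r₁ ≠ 0`, for `a = u^i·w₁^j·d^k`:
`a·d - d·a = (1 - r₁^j r₂^i)·u^i w₁^j d^{k+1} - (φ_{i-1}/r₁)·u^{i-1} w₁^{j+1} d^k`,
where the second term vanishes for `i = 0`. -/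
theorem downUp_commutator_d (K : Type) [Field K] [CharZero K] (α β r₁ r₂ : K)
    (hr₁ : r₁ ≠ 0) (hsum : α = r₁ + r₂) (hprod : β = -(r₁ * r₂)) :
    let u := DownUp.u K α β 0
    let d := DownUp.d K α β 0
    let w₁ := β • (u * d) + r₁ • (d * u)
    ∀ i j k : ℕ,
      (u ^ i * w₁ ^ j * d ^ k) * d - d * (u ^ i * w₁ ^ j * d ^ k) =
        (1 - r₁ ^ j * r₂ ^ i) • (u ^ i * w₁ ^ j * d ^ (k + 1)) -
          (phiPred K r₁ r₂ i / r₁) • (u ^ (i - 1) * w₁ ^ (j + 1) * d ^ k) := by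
  intro u d w₁ i j k
  simp only [u, d, w₁]
  set U' := DownUp.u K α β 0 with hU
  set D' := DownUp.d K α β 0 with hD
  set W' := β • (U' * D') + r₁ • (D' * U') with hW
  have hda : D' * (U' ^ i * W' ^ j * D' ^ k) =
      (r₂ ^ i * r₁ ^ j) • (U' ^ i * W' ^ j * D' ^ (k + 1)) +
      (phiPred K r₁ r₂ i / r₁) • (U' ^ (i - 1) * W' ^ (j + 1) * D' ^ k) := by
    rw [mul_assoc, ← mul_assoc D', dui hsum hprod hr₁ i, add_mul, smul_mul_assoc,
      smul_mul_assoc]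
    rw [mul_assoc (U' ^ i), ← mul_assoc D', dwj hsum hprod j, smul_mul_assoc,
      mul_smul_comm, smul_smul]
    rw [mul_assoc (U' ^ (i - 1)), ← mul_assoc W' (W' ^ j), ← pow_succ']
    rw [mul_assoc (W' ^ j) D' (D' ^ k), ← pow_succ']
    rw [← mul_assoc (U' ^ i), ← mul_assoc (U' ^ (i - 1))]
  rw [hda, mul_assoc, ← pow_succ]
  match_scalars <;> ring
end
end

section
/- In the down-up algebra A(α,β,0) with r₁ ≠ 0, for a = u^i·w₁^j·d^k one has a·u - u·a = -(1 - r₁^j r₂^k)·u^{i+1} w₁^j d^k + (φ_{k-1}/r₁)·u^i w₁^{j+1} d^{k-1} (the second term is 0 when k = 0). -/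
noncomputable section

open FreeAlgebra

/-- In `A(α,β,0)` with `r₁ ≠ 0`, for `a = u^i·w₁^j·d^k`:
`a·u - u·a = -(1 - r₁^j r₂^k)·u^{i+1} w₁^j d^k + (φ_{k-1}/r₁)·u^i w₁^{j+1} d^{k-1}`,
where the second term vanishes for `k = 0`. -/
theorem downUp_commutator_u (K : Type) [Field K] [CharZero K] (α β r₁ r₂ : K)
    (hr₁ : r₁ ≠ 0) (hsum : α = r₁ + r₂) (hprod : β = -(r₁ * r₂)) :
    let u := DownUp.u K α β 0
    let d := DownUp.d K α β 0
    let w₁ := β • (u * d) + r₁ • (d * u)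
    ∀ i j k : ℕ,
      (u ^ i * w₁ ^ j * d ^ k) * u - u * (u ^ i * w₁ ^ j * d ^ k) =
        -((1 - r₁ ^ j * r₂ ^ k) • (u ^ (i + 1) * w₁ ^ j * d ^ k)) +
          (phiPred K r₁ r₂ k / r₁) • (u ^ i * w₁ ^ (j + 1) * d ^ (k - 1)) := by
  intro u d w₁
  have hrel1 : d * d * u = α • (d * u * d) + β • (u * d * d) := by
    have h := RingQuot.mkAlgHom_rel K (DownUpRel.rel1 (K := K) (α := α) (β := β) (γ := 0))
    simp only [map_mul, map_add, map_smul, zero_smul, add_zero] at h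
    exact h
  have hrel2 : d * u * u = α • (u * d * u) + β • (u * u * d) := by
    have h := RingQuot.mkAlgHom_rel K (DownUpRel.rel2 (K := K) (α := α) (β := β) (γ := 0))
    simp only [map_mul, map_add, map_smul, zero_smul, add_zero] at h
    exact h
  have hrel1' : d * (d * u) = α • (d * (u * d)) + β • (u * (d * d)) := by
    simpa only [mul_assoc] using hrel1
  have hrel2' : d * (u * u) = α • (u * (d * u)) + β • (u * (u * d)) := by
    simpa only [mul_assoc] using hrel2
  have hw : w₁ = β • (u * d) + r₁ • (d * u) := rfl
  have hdu : d * u = r₂ • (u * d) + r₁⁻¹ • w₁ := by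
    rw [hw, smul_add, smul_smul, smul_smul, inv_mul_cancel₀ hr₁, one_smul, ← add_assoc,
      ← add_smul]
    have h0 : r₂ + r₁⁻¹ * β = 0 := by subst hprod; field_simp; ring
    rw [h0, zero_smul, zero_add]
  have hw1u : w₁ * u = r₁ • (u * w₁) := by
    rw [hw]
    simp only [add_mul, smul_mul_assoc, mul_assoc]
    rw [hrel2']
    simp only [mul_add, smul_add, smul_smul, mul_smul_comm]
    match_scalars <;> (subst hsum hprod; ring)
  have hdw : d * w₁ = r₁ • (w₁ * d) := by
    rw [hw]
    simp only [mul_add, add_mul, mul_smul_comm, smul_mul_assoc, mul_assoc]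
    rw [hrel1']
    simp only [smul_add, smul_smul]
    match_scalars <;> (subst hsum hprod; ring)
  have hw1pow : ∀ j : ℕ, w₁ ^ j * u = (r₁ ^ j) • (u * w₁ ^ j) := by
    intro j
    induction j with
    | zero => simp
    | succ n ih =>
      rw [pow_succ, mul_assoc, hw1u, mul_smul_comm, ← mul_assoc, ih]
      rw [smul_mul_assoc, smul_smul, pow_succ, mul_assoc]
      ring_nf
  have hphirec : ∀ m : ℕ, phi K r₁ r₂ (m + 1) = r₂ ^ (m + 1) + r₁ * phi K r₁ r₂ m := by
    intro m
    rw [phi, Finset.sum_range_succ', phi, Finset.mul_sum]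
    simp only [pow_zero, one_mul, Nat.sub_zero, Nat.succ_sub_succ]
    rw [add_comm]
    congr 1
    exact Finset.sum_congr rfl fun i _ => by rw [pow_succ]; ring
  have hphi : ∀ m : ℕ, phiPred K r₁ r₂ (m + 1) = r₂ ^ m + r₁ * phiPred K r₁ r₂ m := by
    intro m
    cases m with
    | zero => simp [phiPred, phi]
    | succ n =>
      simp only [phiPred, Nat.succ_ne_zero, if_false, Nat.add_sub_cancel]
      exact hphirec n
  have hdpow : ∀ k : ℕ, d ^ k * u =
      (r₂ ^ k) • (u * d ^ k) + (phiPred K r₁ r₂ k / r₁) • (w₁ * d ^ (k - 1)) := by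
    intro k
    induction k with
    | zero => simp [phiPred]
    | succ n ih =>
      cases n with
      | zero =>
        have h1 : phiPred K r₁ r₂ 1 = 1 := by simp [phiPred, phi]
        simp only [zero_add, pow_one, pow_zero, Nat.sub_self, h1, mul_one]
        rw [hdu]
        match_scalars <;> field_simp
      | succ m =>
        rw [pow_succ', mul_assoc, ih, mul_add, mul_smul_comm, mul_smul_comm,
          ← mul_assoc d u, hdu, ← mul_assoc d w₁, hdw]
        simp only [Nat.add_sub_cancel, add_mul, smul_mul_assoc, smul_add, smul_smul,
          mul_assoc, ← pow_succ']
        rw [hphi (m + 1)]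
        match_scalars <;> field_simp <;> ring
  intro i j k
  rw [mul_assoc (u ^ i * w₁ ^ j) (d ^ k) u, hdpow k, mul_add, mul_smul_comm, mul_smul_comm,
    ← mul_assoc (u ^ i * w₁ ^ j) u (d ^ k), mul_assoc (u ^ i) (w₁ ^ j) u, hw1pow j]
  simp only [smul_mul_assoc, mul_smul_comm, smul_smul, ← mul_assoc]
  rw [(by rw [← pow_succ', pow_succ] : u * u ^ i = u ^ i * u)]
  simp only [pow_succ, ← mul_assoc]
  match_scalars <;> ring
end
end

section
/- In the down-up algebra A(α,β,0) with r₁ ≠ 0, for a = u^i·w₁^j·d^k one has d·a + β·a·d = (β + r₁^j r₂^i)·u^i w₁^j d^{k+1} + (φ_{i-1}/r₁)·u^{i-1} w₁^{j+1} d^k (with the convention that a term with negative exponent of u vanishes). -/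
noncomputable section

open FreeAlgebra

lemma phi_succ' (K : Type) [Field K] (r₁ r₂ : K) (p : ℕ) :
    phi K r₁ r₂ (p+1) = r₂ * phi K r₁ r₂ p + r₁ ^ (p+1) := by
  unfold phi
  rw [Finset.sum_range_succ, Finset.mul_sum]
  congr 1
  · exact Finset.sum_congr rfl fun i hi => by
      rw [Finset.mem_range] at hi
      rw [show p + 1 - i = (p - i) + 1 by omega, pow_succ]; ring
  · simp

section Aux
variable {K : Type} [Field K] {A : Type} [Ring A] [Algebra K A]
variable {r₁ r₂ : K} {u d w₁ : A}

lemma aux_dw (hw : w₁ = (-(r₁*r₂)) • (u*d) + r₁ • (d*u))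
    (h1 : d*(d*u) = (r₁+r₂) • (d*(u*d)) + (-(r₁*r₂)) • (u*(d*d))) :
    d * w₁ = r₁ • (w₁ * d) := by
  rw [hw]
  simp only [mul_add, add_mul, smul_mul_assoc, mul_smul_comm, mul_assoc, h1]
  match_scalars <;> ring

lemma aux_wu (hw : w₁ = (-(r₁*r₂)) • (u*d) + r₁ • (d*u))
    (h2 : d*(u*u) = (r₁+r₂) • (u*(d*u)) + (-(r₁*r₂)) • (u*(u*d))) :
    w₁ * u = r₁ • (u * w₁) := by
  rw [hw]
  simp only [mul_add, add_mul, smul_mul_assoc, mul_smul_comm, mul_assoc, h2]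
  match_scalars <;> ring

lemma aux_du (hr₁ : r₁ ≠ 0) (hw : w₁ = (-(r₁*r₂)) • (u*d) + r₁ • (d*u)) :
    d * u = r₂ • (u * d) + r₁⁻¹ • w₁ := by
  rw [hw]
  match_scalars
  all_goals field_simp
  all_goals ring

lemma aux_dwj (hw : w₁ = (-(r₁*r₂)) • (u*d) + r₁ • (d*u))
    (h1 : d*(d*u) = (r₁+r₂) • (d*(u*d)) + (-(r₁*r₂)) • (u*(d*d))) (j : ℕ) :
    d * w₁ ^ j = (r₁ ^ j) • (w₁ ^ j * d) := by
  induction j with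
  | zero => simp
  | succ n ih =>
    rw [pow_succ', ← mul_assoc, aux_dw hw h1, smul_mul_assoc, mul_assoc, ih]
    simp only [pow_succ', mul_smul_comm, smul_smul, mul_assoc]

lemma aux_wuj (hw : w₁ = (-(r₁*r₂)) • (u*d) + r₁ • (d*u))
    (h2 : d*(u*u) = (r₁+r₂) • (u*(d*u)) + (-(r₁*r₂)) • (u*(u*d))) (i : ℕ) :
    w₁ * u ^ i = (r₁ ^ i) • (u ^ i * w₁) := by
  induction i with
  | zero => simp
  | succ n ih =>
    rw [pow_succ', ← mul_assoc, aux_wu hw h2, smul_mul_assoc, mul_assoc, ih]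
    simp only [pow_succ', mul_smul_comm, smul_smul, mul_assoc]

lemma aux_dui (hr₁ : r₁ ≠ 0) (hw : w₁ = (-(r₁*r₂)) • (u*d) + r₁ • (d*u))
    (h1 : d*(d*u) = (r₁+r₂) • (d*(u*d)) + (-(r₁*r₂)) • (u*(d*d)))
    (h2 : d*(u*u) = (r₁+r₂) • (u*(d*u)) + (-(r₁*r₂)) • (u*(u*d))) (i : ℕ) :
    d * u ^ i = (r₂ ^ i) • (u ^ i * d) + (phiPred K r₁ r₂ i / r₁) • (u ^ (i-1) * w₁) := by
  induction i with
  | zero => simp [phiPred]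
  | succ n ih =>
    have hw1 : d * u ^ (n+1) = r₂ • (u * (d * u ^ n)) + r₁⁻¹ • (w₁ * u ^ n) := by
      rw [pow_succ', ← mul_assoc, aux_du hr₁ hw]
      simp only [add_mul, smul_mul_assoc, mul_assoc]
    rw [hw1, ih, aux_wuj hw h2]
    cases n with
    | zero =>
      simp [phiPred, phi, mul_add, smul_add, mul_smul_comm, smul_smul]
    | succ m =>
      have hps : phiPred K r₁ r₂ (m+2) = r₂ * phiPred K r₁ r₂ (m+1) + r₁ ^ (m+1) := by
        simp only [phiPred, Nat.succ_ne_zero, if_false, Nat.add_sub_cancel]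
        exact phi_succ' K r₁ r₂ m
      rw [hps]
      simp only [Nat.add_sub_cancel, pow_succ', mul_add, smul_add, mul_smul_comm,
        smul_smul, mul_assoc]
      match_scalars
      all_goals field_simp
      all_goals ring

lemma aux_main (hr₁ : r₁ ≠ 0) (hw : w₁ = (-(r₁*r₂)) • (u*d) + r₁ • (d*u))
    (h1 : d*(d*u) = (r₁+r₂) • (d*(u*d)) + (-(r₁*r₂)) • (u*(d*d)))
    (h2 : d*(u*u) = (r₁+r₂) • (u*(d*u)) + (-(r₁*r₂)) • (u*(u*d))) (i j k : ℕ) :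
    d * (u ^ i * w₁ ^ j * d ^ k) + (-(r₁*r₂)) • ((u ^ i * w₁ ^ j * d ^ k) * d) =
      ((-(r₁*r₂)) + r₁ ^ j * r₂ ^ i) • (u ^ i * w₁ ^ j * d ^ (k + 1)) +
        (phiPred K r₁ r₂ i / r₁) • (u ^ (i - 1) * w₁ ^ (j + 1) * d ^ k) := by
  have hdk : (d : A) ^ k * d = d * d ^ k := by rw [← pow_succ, ← pow_succ']
  have key : d * (u^i * w₁^j) = (r₁^j * r₂^i) • (u^i * w₁^j * d)
      + (phiPred K r₁ r₂ i / r₁) • (u^(i-1) * w₁^(j+1)) := by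
    rw [← mul_assoc, aux_dui hr₁ hw h1 h2, add_mul, smul_mul_assoc, smul_mul_assoc,
      mul_assoc, aux_dwj hw h1, mul_assoc]
    simp only [mul_smul_comm, smul_smul, mul_assoc, pow_succ']
    match_scalars
    all_goals ring
  rw [show d * (u^i * w₁^j * d^k) = (d * (u^i * w₁^j)) * d^k by simp only [mul_assoc], key]
  simp only [add_mul, smul_mul_assoc, mul_assoc, hdk, pow_succ']
  match_scalars
  all_goals ring

end Aux

/-- In `A(α,β,0)` with `r₁ ≠ 0`, for `a = u^i·w₁^j·d^k`:
`d·a + β·a·d = (β + r₁^j r₂^i)·u^i w₁^j d^{k+1} + (φ_{i-1}/r₁)·u^{i-1} w₁^{j+1} d^k`,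
where the second term vanishes for `i = 0`. -/
theorem downUp_da_plus_beta_ad (K : Type) [Field K] [CharZero K] (α β r₁ r₂ : K)
    (hr₁ : r₁ ≠ 0) (hsum : α = r₁ + r₂) (hprod : β = -(r₁ * r₂)) :
    let u := DownUp.u K α β 0
    let d := DownUp.d K α β 0
    let w₁ := β • (u * d) + r₁ • (d * u)
    ∀ i j k : ℕ,
      d * (u ^ i * w₁ ^ j * d ^ k) + β • ((u ^ i * w₁ ^ j * d ^ k) * d) =
        (β + r₁ ^ j * r₂ ^ i) • (u ^ i * w₁ ^ j * d ^ (k + 1)) +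
          (phiPred K r₁ r₂ i / r₁) • (u ^ (i - 1) * w₁ ^ (j + 1) * d ^ k) := by
  subst hsum
  subst hprod
  intro u d w₁ i j k
  have hw : w₁ = (-(r₁*r₂)) • (u*d) + r₁ • (d*u) := rfl
  have h1 : d*(d*u) = ((r₁+r₂)) • (d*(u*d)) + (-(r₁*r₂)) • (u*(d*d)) := by
    rw [show (-(r₁*r₂) : K) • (u*(d*d)) = -((r₁*r₂) • (u*(d*d))) by module]
    have := RingQuot.mkAlgHom_rel K
      (DownUpRel.rel1 (K := K) (α := r₁+r₂) (β := -(r₁*r₂)) (γ := 0))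
    simpa [DownUp.u, DownUp.d, map_mul, mul_assoc, neg_smul, u, d] using this
  have h2 : d*(u*u) = ((r₁+r₂)) • (u*(d*u)) + (-(r₁*r₂)) • (u*(u*d)) := by
    rw [show (-(r₁*r₂) : K) • (u*(u*d)) = -((r₁*r₂) • (u*(u*d))) by module]
    have := RingQuot.mkAlgHom_rel K
      (DownUpRel.rel2 (K := K) (α := r₁+r₂) (β := -(r₁*r₂)) (γ := 0))
    simpa [DownUp.u, DownUp.d, map_mul, mul_assoc, neg_smul, u, d] using this
  exact aux_main hr₁ hw h1 h2 i j k
end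
end
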